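/- arXiv:2511.06569 — 7 statements merged into one kernel-verified Lean document; each statement's English description precedes it below -/
import Mathlib

section
/- There is no strongly regular graph with parameters (19, 6, 1, 2); that is, no simple graph on 19 vertices exists that is 6-regular, in which every pair of adjacent vertices has exactly 1 common neighbor and every pair of non-adjacent vertices has exactly 2 common neighbors. -/
/-!
The adjacency matrix `A` of an `srg(n, k, λ, μ)` satisfies `A² + (μ - λ)A + (μ - k)I = μJ` and
`AJ = kJ`, so every eigenvalue is `k` or a root of `x² + (μ - λ)x + (μ - k)`. Taking traces of
both sides shows that `k` is a simple eigenvalue, and then `tr A = 0` forces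
`(μ - λ)(n - 1) - 2k = (f - g)√((μ - λ)² + 4(k - μ))`, where `f` and `g` are the multiplicities of
the two roots. For `(19, 6, 1, 2)` this reads `6 = (f - g)√17`, which is impossible.
-/

open Matrix Polynomial Finset

namespace Matrix.IsHermitian

variable {𝕜 n : Type*} [RCLike 𝕜] [Fintype n] [DecidableEq n] {A : Matrix n n 𝕜}

theorem eval_eigenvalues_eq_zero_of_aeval_eq_zero (hA : A.IsHermitian) {p : ℝ[X]}
    (hp : aeval A p = 0) (i : n) : p.eval (hA.eigenvalues i) = 0 := by
  have : Nonempty n := ⟨i⟩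
  have := spectrum.subset_polynomial_aeval A p ⟨_, hA.eigenvalues_mem_spectrum_real i, rfl⟩
  rwa [hp, spectrum.zero_eq, Set.mem_singleton_iff] at this

theorem trace_aeval (hA : A.IsHermitian) (p : 𝕜[X]) :
    (aeval A p).trace = ∑ i, p.eval (hA.eigenvalues i : 𝕜) := by
  conv_lhs => rw [hA.spectral_theorem]
  rw [Polynomial.aeval_algHom_apply, Unitary.conjStarAlgAut_apply, trace_mul_cycle,
    Unitary.coe_star_mul_self, one_mul, ← diagonalAlgHom_apply (R := 𝕜),
    Polynomial.aeval_algHom_apply, diagonalAlgHom_apply, trace_diagonal]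
  simp [aeval_fn_apply]

end Matrix.IsHermitian

theorem Finset.exists_int_sum_eq_mul_sqrt {ι : Type*} (s : Finset ι) {x : ι → ℝ} {d : ℝ}
    (hx : ∀ i ∈ s, x i ^ 2 = d) : ∃ z : ℤ, ∑ i ∈ s, x i = z * √d := by
  classical
  induction s using Finset.induction_on with
  | empty => exact ⟨0, by simp⟩
  | insert i s hi ih =>
    obtain ⟨z, hz⟩ := ih fun j hj ↦ hx j (mem_insert_of_mem hj)
    have hxi : √d = |x i| := by rw [← hx i (mem_insert_self i s), Real.sqrt_sq_eq_abs]
    rw [sum_insert hi, hz, hxi]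
    rcases abs_choice (x i) with habs | habs
    · exact ⟨z + 1, by push_cast; linarith⟩
    · exact ⟨z - 1, by push_cast; linarith⟩

/-- `e` plays the role of the spectrum of a trace-zero matrix `A` with `(A - k)(A² + bA + c) = 0`;
`hq` forces `k` to be a simple eigenvalue. -/
theorem exists_int_mul_sqrt_eq_of_sum_eq_zero {ι : Type*} [Fintype ι] {e : ι → ℝ} {k b c : ℝ}
    (hroot : ∀ i, e i ≠ k → e i ^ 2 + b * e i + c = 0) (hsum : ∑ i, e i = 0)
    (hq : ∑ i, (e i ^ 2 + b * e i + c) = k ^ 2 + b * k + c) (hqk : k ^ 2 + b * k + c ≠ 0) :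
    ∃ z : ℤ, b * (Fintype.card ι - 1) - 2 * k = z * √(b ^ 2 - 4 * c) := by
  classical
  set K := univ.filter (e · = k)
  set F := univ.filter (e · ≠ k)
  have hsplit (f : ℝ → ℝ) : ∑ i, f (e i) = #K * f k + ∑ i ∈ F, f (e i) := by
    rw [← sum_filter_add_sum_filter_not univ (e · = k), sum_congr rfl fun i hi ↦ by
      rw [(mem_filter.mp hi).2], sum_const, nsmul_eq_mul]
  have hK : (#K : ℝ) = 1 := by
    have hF0 : ∑ i ∈ F, (e i ^ 2 + b * e i + c) = 0 :=
      sum_eq_zero fun i hi ↦ hroot i (mem_filter.mp hi).2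
    rw [hsplit (fun x ↦ x ^ 2 + b * x + c), hF0, add_zero] at hq
    exact (mul_left_inj' hqk).mp (hq.trans (one_mul _).symm)
  have hcardF : (#F : ℝ) = Fintype.card ι - 1 := by
    have hKF : #K + #F = Fintype.card ι := card_filter_add_card_filter_not (s := univ) _
    rw [← hK, ← hKF]
    push_cast
    ring
  have hsumF : ∑ i ∈ F, e i = -k := by
    have := hsplit id
    simp only [id, hsum, hK] at this
    linarith
  obtain ⟨z, hz⟩ := F.exists_int_sum_eq_mul_sqrt (x := fun i ↦ 2 * e i + b) (d := b ^ 2 - 4 * c)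
    fun i hi ↦ by linear_combination 4 * hroot i (mem_filter.mp hi).2
  refine ⟨z, ?_⟩
  rw [← hz, sum_add_distrib, ← mul_sum, hsumF, sum_const, nsmul_eq_mul, hcardF]
  ring

namespace SimpleGraph

variable {V R : Type*} [Fintype V] {G : SimpleGraph V} [DecidableRel G.Adj] [CommRing R]
  {n k ℓ μ : ℕ}

theorem IsRegularOfDegree.adjMatrix_mul_of_one (h : G.IsRegularOfDegree k) :
    G.adjMatrix R * of 1 = (k : R) • of 1 := by
  ext v w
  simp [mul_apply, ← h.degree_eq v, degree, neighborFinset_eq_filter]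

theorem IsSRGWith.adjMatrix_sq_add_eq [DecidableEq V] (h : G.IsSRGWith n k ℓ μ) :
    G.adjMatrix R ^ 2 + ((μ : R) - ℓ) • G.adjMatrix R + ((μ : R) - k) • 1 = (μ : R) • of 1 := by
  classical
  have hJ := G.one_add_adjMatrix_add_compl_adjMatrix_eq_of_one R
  rw [compl_adjMatrix_eq_adjMatrix_compl] at hJ
  rw [h.matrix_eq, ← hJ]
  simp only [← Nat.cast_smul_eq_nsmul R]
  module

theorem IsSRGWith.param_eq_ring [Nonempty V] (h : G.IsSRGWith n k ℓ μ) :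
    (k : R) * (k - ℓ - 1) = (n - k - 1) * μ := by
  classical
  have hAJ := h.regular.adjMatrix_mul_of_one (R := R)
  have hJJ : (of 1 : Matrix V V R) * of 1 = (n : R) • of 1 := by
    ext; simp [mul_apply, ← h.card]
  have hq := congrArg (· * (of 1 : Matrix V V R)) h.adjMatrix_sq_add_eq
  simp only [add_mul, sq, Matrix.mul_assoc, hAJ, smul_mul, Matrix.mul_smul, Matrix.one_mul,
    hJJ, smul_smul, ← add_smul] at hq
  obtain ⟨v⟩ := ‹Nonempty V›
  have := congrFun (congrFun hq v) v
  simp only [Matrix.smul_apply, of_apply, Pi.one_apply, smul_eq_mul, mul_one] at this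
  linear_combination this

theorem IsSRGWith.exists_int_mul_sqrt_eq (h : G.IsSRGWith n k ℓ μ) (hn : 0 < n) (hμ : μ ≠ 0) :
    ∃ z : ℤ, ((μ : ℝ) - ℓ) * (n - 1) - 2 * k = z * √(((μ : ℝ) - ℓ) ^ 2 + 4 * (k - μ)) := by
  classical
  have : Nonempty V := Fintype.card_pos_iff.mp (h.card ▸ hn)
  set A := G.adjMatrix ℝ
  have hA : A.IsHermitian := G.isHermitian_adjMatrix ℝ
  set q : ℝ[X] := X ^ 2 + C ((μ : ℝ) - ℓ) * X + C ((μ : ℝ) - k)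
  have hqA : aeval A q = (μ : ℝ) • of 1 := by
    simp only [q, map_add, map_mul, map_pow, aeval_X, aeval_C, Algebra.algebraMap_eq_smul_one,
      Matrix.smul_mul, Matrix.one_mul]
    exact h.adjMatrix_sq_add_eq
  have hroot (i : V) : hA.eigenvalues i ≠ k → q.eval (hA.eigenvalues i) = 0 := by
    have hp : aeval A ((X - C (k : ℝ)) * q) = 0 := by
      rw [map_mul, hqA, map_sub, aeval_X, aeval_C, Algebra.algebraMap_eq_smul_one, Matrix.sub_mul,
        Matrix.mul_smul, h.regular.adjMatrix_mul_of_one, smul_mul, Matrix.one_mul, smul_comm,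
        sub_self]
    have := hA.eval_eigenvalues_eq_zero_of_aeval_eq_zero hp i
    rw [eval_mul, eval_sub, eval_X, eval_C] at this
    exact fun hi ↦ (mul_eq_zero.mp this).resolve_left (sub_ne_zero.mpr hi)
  have hsum : ∑ i, hA.eigenvalues i = 0 := by
    simpa [A, trace_adjMatrix] using hA.trace_eq_sum_eigenvalues.symm
  have hq : ∑ i, q.eval (hA.eigenvalues i) = μ * n := by
    have := hA.trace_aeval q
    rw [hqA, trace_smul] at this
    simpa [trace, h.card] using this.symm
  have hqk : (k : ℝ) ^ 2 + (μ - ℓ) * k + (μ - k) = μ * n := by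
    linear_combination h.param_eq_ring (R := ℝ)
  obtain ⟨z, hz⟩ := exists_int_mul_sqrt_eq_of_sum_eq_zero (k := (k : ℝ)) (b := (μ : ℝ) - ℓ)
    (c := (μ : ℝ) - k) (e := hA.eigenvalues) (by simpa [q] using hroot) hsum
    (by simpa [q, hqk] using hq)
    (hqk ▸ mul_ne_zero (by exact_mod_cast hμ) (by exact_mod_cast hn.ne'))
  refine ⟨z, ?_⟩
  rw [h.card] at hz
  convert hz using 3
  ring

end SimpleGraph

/-- There is no strongly regular graph with parameters (19, 6, 1, 2). -/
theorem no_srg_19_6_1_2 :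
    ∀ (V : Type) [Fintype V] (G : SimpleGraph V) [DecidableRel G.Adj],
      ¬ G.IsSRGWith 19 6 1 2 := by
  intro V _ G _ h
  obtain ⟨z, hz⟩ := h.exists_int_mul_sqrt_eq (by norm_num) (by norm_num)
  norm_num at hz
  have h36 : ((36 : ℤ) : ℝ) = ((17 * z ^ 2 : ℤ) : ℝ) := by
    push_cast
    rw [show (36 : ℝ) = 6 ^ 2 by norm_num, hz, mul_pow, Real.sq_sqrt (by norm_num)]
    ring
  have : (17 : ℤ) ∣ 36 := ⟨z ^ 2, Int.cast_inj.mp h36⟩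
  norm_num at this
end

section
/- Let G be a strongly regular graph with parameters (19, 6, 1, 2), let {a, b, c} be a triangle in G, and let W be the set of vertices not adjacent to any of a, b, c and distinct from a, b, c. Then no two vertices of W are adjacent, i.e., the induced subgraph of G on W has no edges. -/
/-!
Let `w` be a vertex outside the triangle `{a, b, c}` and adjacent to none of its vertices. Each
of `a`, `b`, `c` shares `μ = 2` neighbours with `w`, and these three pairs are disjoint: a common
neighbour of `w`, `a` and `b` would be a second common neighbour of the edge `ab` besides `c`,
contradicting `λ = 1`. They thus fill all `k = 6` neighbours of `w`, so every neighbour of `w` is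
adjacent to the triangle and cannot lie in `W`.
-/

namespace SimpleGraph

variable {V : Type*} [Fintype V] {G : SimpleGraph V} [DecidableRel G.Adj]
  {n k μ : ℕ}

theorem IsSRGWith.eq_of_mem_commonNeighbors (h : G.IsSRGWith n k 1 μ) {u v x y : V}
    (huv : G.Adj u v) (hx : x ∈ G.commonNeighbors u v) (hy : y ∈ G.commonNeighbors u v) :
    x = y := by
  obtain ⟨z, hz⟩ := Finset.card_eq_one.mp ((Set.toFinset_card _).trans (h.of_adj u v huv))
  have hx' := Set.mem_toFinset.mpr hx
  have hy' := Set.mem_toFinset.mpr hy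
  rw [hz, Finset.mem_singleton] at hx' hy'
  rw [hx', hy']

theorem IsSRGWith.disjoint_commonNeighbors_of_not_adj (h : G.IsSRGWith n k 1 μ) {a b c w : V}
    (hab : G.Adj a b) (hac : G.Adj a c) (hbc : G.Adj b c) (hcw : ¬G.Adj c w) :
    Disjoint (G.commonNeighbors a w) (G.commonNeighbors b w) := by
  refine Set.disjoint_left.mpr fun x hxa hxb => hcw ?_
  have hxc : x = c := h.eq_of_mem_commonNeighbors hab ⟨hxa.1, hxb.1⟩ ⟨hac, hbc⟩
  exact hxc ▸ hxa.2.symm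

theorem IsSRGWith.neighborSet_subset_of_triangle [DecidableEq V] (h : G.IsSRGWith n k 1 μ) (hk : k = 3 * μ)
    {a b c w : V} (hab : G.Adj a b) (hac : G.Adj a c) (hbc : G.Adj b c)
    (haw : ¬G.Adj a w) (hbw : ¬G.Adj b w) (hcw : ¬G.Adj c w)
    (hwa : w ≠ a) (hwb : w ≠ b) (hwc : w ≠ c) :
    G.neighborSet w ⊆ G.neighborSet a ∪ G.neighborSet b ∪ G.neighborSet c := by
  set S := (G.commonNeighbors a w).toFinset ∪ (G.commonNeighbors b w).toFinset ∪
    (G.commonNeighbors c w).toFinset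
  have hS : S ⊆ G.neighborFinset w := by
    intro x hx
    simp only [S, Finset.mem_union, Set.mem_toFinset, mem_commonNeighbors] at hx
    rw [mem_neighborFinset]
    rcases hx with (hx | hx) | hx <;> exact hx.2
  have hcard : S.card = k := by
    have hμ : ∀ u, u ≠ w → ¬G.Adj u w → (G.commonNeighbors u w).toFinset.card = μ :=
      fun u huw hu => (Set.toFinset_card _).trans (h.of_not_adj huw hu)
    rw [Finset.card_union_of_disjoint, Finset.card_union_of_disjoint,
      hμ a hwa.symm haw, hμ b hwb.symm hbw, hμ c hwc.symm hcw, hk]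
    · ring
    · exact Set.disjoint_toFinset.mpr (h.disjoint_commonNeighbors_of_not_adj hab hac hbc hcw)
    · exact Finset.disjoint_union_left.mpr
        ⟨Set.disjoint_toFinset.mpr (h.disjoint_commonNeighbors_of_not_adj hac hab hbc.symm hbw),
         Set.disjoint_toFinset.mpr
           (h.disjoint_commonNeighbors_of_not_adj hbc hab.symm hac.symm haw)⟩
  have hSeq : S = G.neighborFinset w := Finset.eq_of_subset_of_card_le hS
    (by rw [hcard, card_neighborFinset_eq_degree, h.regular w])
  intro x hx
  replace hx : x ∈ S := hSeq ▸ (mem_neighborFinset _ _ _).mpr hx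
  simp only [S, Finset.mem_union, Set.mem_toFinset, mem_commonNeighbors] at hx
  simp only [Set.mem_union, mem_neighborSet]
  rcases hx with (hx | hx) | hx
  · exact .inl (.inl hx.1)
  · exact .inl (.inr hx.1)
  · exact .inr hx.1

end SimpleGraph

/-- For a triangle {a,b,c} in an srg(19,6,1,2), the set W of vertices distinct from and
non-adjacent to all of a, b, c induces an edgeless subgraph. -/
theorem srg_19_6_1_2_W_independent
    {V : Type} [Fintype V] [DecidableEq V] (G : SimpleGraph V) [DecidableRel G.Adj]
    (h : G.IsSRGWith 19 6 1 2) (a b c : V)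
    (hab : G.Adj a b) (hac : G.Adj a c) (hbc : G.Adj b c)
    (W : Finset V)
    (hW : W = Finset.univ.filter
      (fun v => ¬G.Adj a v ∧ ¬G.Adj b v ∧ ¬G.Adj c v ∧ v ≠ a ∧ v ≠ b ∧ v ≠ c)) :
    ∀ w₁ ∈ W, ∀ w₂ ∈ W, ¬ G.Adj w₁ w₂ := by
  subst hW
  simp only [Finset.mem_filter, Finset.mem_univ, true_and]
  rintro w₁ ⟨haw, hbw, hcw, hwa, hwb, hwc⟩ w₂ ⟨ha₂, hb₂, hc₂, -⟩ hadj
  have := h.neighborSet_subset_of_triangle rfl hab hac hbc haw hbw hcw hwa hwb hwc hadj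
  simp only [Set.mem_union, SimpleGraph.mem_neighborSet] at this
  tauto
end

section
/- Let G be a strongly regular graph with parameters (19, 6, 1, 2) and let {a, b, c} be a triangle in G with associated sets A, B, C, W. Then there are exactly 12 triangles of G having exactly one vertex in W and two vertices in A ∪ B ∪ C. -/
open Finset

/-- Card of common neighbors as a finset intersection. -/
lemma srg_aux_cnf {V : Type} [Fintype V] [DecidableEq V] (G : SimpleGraph V)
    [DecidableRel G.Adj] (v w : V) :
    (G.neighborFinset v ∩ G.neighborFinset w).card = Fintype.card (G.commonNeighbors v w) := by
  rw [← Set.toFinset_card]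
  congr 1
  ext x
  rw [Set.mem_toFinset]
  simp [SimpleGraph.commonNeighbors]

/-- For a triangle {a,b,c} in an srg(19,6,1,2), there are exactly 12 triangles of G having
exactly one vertex in W and two vertices in A ∪ B ∪ C. -/
theorem srg_19_6_1_2_twelve_mixed_triangles
    {V : Type} [Fintype V] [DecidableEq V] (G : SimpleGraph V) [DecidableRel G.Adj]
    (h : G.IsSRGWith 19 6 1 2) (a b c : V)
    (hab : G.Adj a b) (hac : G.Adj a c) (hbc : G.Adj b c)
    (A B C W : Finset V)
    (hA : A = Finset.univ.filter (fun v => G.Adj a v ∧ v ≠ b ∧ v ≠ c))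
    (hB : B = Finset.univ.filter (fun v => G.Adj b v ∧ v ≠ a ∧ v ≠ c))
    (hC : C = Finset.univ.filter (fun v => G.Adj c v ∧ v ≠ a ∧ v ≠ b))
    (hW : W = Finset.univ \ (A ∪ B ∪ C ∪ {a, b, c})) :
    ((G.cliqueFinset 3).filter
      (fun t => (t ∩ W).card = 1 ∧ (t ∩ (A ∪ B ∪ C)).card = 2)).card = 12 := by
  -- uniqueness of the common neighbor of an adjacent pair (λ = 1)
  have huniq : ∀ x y z v : V, G.Adj x y → G.Adj x z → G.Adj y z →
      G.Adj x v → G.Adj y v → v = z := by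
    intro x y z v hxy hxz hyz hxv hyv
    have h1 := h.of_adj x y hxy
    have hz : z ∈ G.commonNeighbors x y := ⟨hxz, hyz⟩
    have hv : v ∈ G.commonNeighbors x y := ⟨hxv, hyv⟩
    have := Fintype.card_le_one_iff.mp (le_of_eq h1) ⟨v, hv⟩ ⟨z, hz⟩
    exact Subtype.ext_iff.mp this
  -- degrees
  have hdeg : ∀ v : V, (G.neighborFinset v).card = 6 := fun v => h.regular v
  -- cards of A, B, C
  have hcardA : A.card = 4 := by
    have hAe : A = G.neighborFinset a \ {b, c} := by
      ext v
      simp only [hA, mem_filter, mem_univ, true_and, mem_sdiff,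
        SimpleGraph.mem_neighborFinset, mem_insert, mem_singleton, not_or]
    rw [hAe, card_sdiff_of_subset]
    · rw [hdeg a, card_pair hbc.ne]
    · intro v hv
      simp only [mem_insert, mem_singleton] at hv
      rcases hv with rfl | rfl <;> simp [SimpleGraph.mem_neighborFinset, hab, hac]
  have hcardB : B.card = 4 := by
    have hBe : B = G.neighborFinset b \ {a, c} := by
      ext v
      simp only [hB, mem_filter, mem_univ, true_and, mem_sdiff,
        SimpleGraph.mem_neighborFinset, mem_insert, mem_singleton, not_or]
    rw [hBe, card_sdiff_of_subset]
    · rw [hdeg b, card_pair hac.ne]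
    · intro v hv
      simp only [mem_insert, mem_singleton] at hv
      rcases hv with rfl | rfl <;> simp [SimpleGraph.mem_neighborFinset, hab.symm, hbc]
  have hcardC : C.card = 4 := by
    have hCe : C = G.neighborFinset c \ {a, b} := by
      ext v
      simp only [hC, mem_filter, mem_univ, true_and, mem_sdiff,
        SimpleGraph.mem_neighborFinset, mem_insert, mem_singleton, not_or]
    rw [hCe, card_sdiff_of_subset]
    · rw [hdeg c, card_pair hab.ne]
    · intro v hv
      simp only [mem_insert, mem_singleton] at hv
      rcases hv with rfl | rfl <;> simp [SimpleGraph.mem_neighborFinset, hac.symm, hbc.symm]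
  -- disjointness
  have hABd : Disjoint A B := by
    rw [Finset.disjoint_left]
    intro v hvA hvB
    rw [hA, mem_filter] at hvA
    rw [hB, mem_filter] at hvB
    exact hvA.2.2.2 (huniq a b c v hab hac hbc hvA.2.1 hvB.2.1)
  have hACd : Disjoint A C := by
    rw [Finset.disjoint_left]
    intro v hvA hvC
    rw [hA, mem_filter] at hvA
    rw [hC, mem_filter] at hvC
    exact hvA.2.2.1 (huniq a c b v hac hab hbc.symm hvA.2.1 hvC.2.1)
  have hBCd : Disjoint B C := by
    rw [Finset.disjoint_left]
    intro v hvB hvC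
    rw [hB, mem_filter] at hvB
    rw [hC, mem_filter] at hvC
    exact hvB.2.2.1 (huniq b c a v hbc hab.symm hac.symm hvB.2.1 hvC.2.1)
  -- a, b, c not in A ∪ B ∪ C
  have habcU : ∀ v ∈ ({a, b, c} : Finset V), v ∉ A ∪ B ∪ C := by
    intro v hv
    simp only [mem_insert, mem_singleton] at hv
    intro hvU
    simp only [mem_union, hA, hB, hC, mem_filter, mem_univ, true_and] at hvU
    rcases hv with rfl | rfl | rfl <;>
      rcases hvU with (⟨h1, h2, h3⟩ | ⟨h1, h2, h3⟩) | ⟨h1, h2, h3⟩ <;>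
      first
        | exact G.irrefl h1
        | exact h2 rfl
        | exact h3 rfl
  have hcardU : (A ∪ B ∪ C).card = 12 := by
    rw [card_union_of_disjoint (by rw [disjoint_union_left]; exact ⟨hACd, hBCd⟩),
      card_union_of_disjoint hABd, hcardA, hcardB, hcardC]
  have hcardF : (A ∪ B ∪ C ∪ {a, b, c}).card = 15 := by
    rw [card_union_of_disjoint, hcardU]
    · have : ({a, b, c} : Finset V).card = 3 := by
        rw [card_insert_of_notMem, card_pair hbc.ne]
        simp only [mem_insert, mem_singleton, not_or]
        exact ⟨hab.ne, hac.ne⟩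
      omega
    · rw [Finset.disjoint_right]
      exact fun v hv => habcU v hv
  have hcardW : W.card = 4 := by
    rw [hW, card_sdiff_of_subset (subset_univ _), card_univ, h.card, hcardF]
  -- membership facts for W
  have hWmem : ∀ w ∈ W, w ∉ A ∧ w ∉ B ∧ w ∉ C ∧ w ≠ a ∧ w ≠ b ∧ w ≠ c := by
    intro w hw
    rw [hW, mem_sdiff] at hw
    have := hw.2
    simp only [mem_union, mem_insert, mem_singleton, not_or] at this
    tauto
  have hWnadj : ∀ w ∈ W, ¬G.Adj a w ∧ ¬G.Adj b w ∧ ¬G.Adj c w := by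
    intro w hw
    obtain ⟨hnA, hnB, hnC, hwa, hwb, hwc⟩ := hWmem w hw
    refine ⟨fun had => hnA ?_, fun had => hnB ?_, fun had => hnC ?_⟩
    · rw [hA, mem_filter]; exact ⟨mem_univ w, had, hwb, hwc⟩
    · rw [hB, mem_filter]; exact ⟨mem_univ w, had, hwa, hwc⟩
    · rw [hC, mem_filter]; exact ⟨mem_univ w, had, hwa, hwb⟩
  -- each w ∈ W has exactly 2 neighbors in each of A, B, C
  have hmu : ∀ (x w : V), x ≠ w → ¬G.Adj x w →
      (G.neighborFinset x ∩ G.neighborFinset w).card = 2 := by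
    intro x w hne hnadj
    rw [srg_aux_cnf, h.of_not_adj hne hnadj]
  have hNwA : ∀ w ∈ W, (G.neighborFinset w ∩ A).card = 2 := by
    intro w hw
    obtain ⟨_, _, _, hwa, hwb, hwc⟩ := hWmem w hw
    obtain ⟨haw, hbw, hcw⟩ := hWnadj w hw
    have he : G.neighborFinset w ∩ A = G.neighborFinset a ∩ G.neighborFinset w := by
      ext v
      simp only [mem_inter, SimpleGraph.mem_neighborFinset, hA, mem_filter, mem_univ, true_and]
      constructor
      · rintro ⟨h1, h2, _, _⟩; exact ⟨h2, h1⟩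
      · rintro ⟨h1, h2⟩
        refine ⟨h2, h1, ?_, ?_⟩
        · rintro rfl; exact hbw h2.symm
        · rintro rfl; exact hcw h2.symm
    rw [he]; exact hmu a w (fun e => hwa e.symm) haw
  have hNwB : ∀ w ∈ W, (G.neighborFinset w ∩ B).card = 2 := by
    intro w hw
    obtain ⟨_, _, _, hwa, hwb, hwc⟩ := hWmem w hw
    obtain ⟨haw, hbw, hcw⟩ := hWnadj w hw
    have he : G.neighborFinset w ∩ B = G.neighborFinset b ∩ G.neighborFinset w := by
      ext v
      simp only [mem_inter, SimpleGraph.mem_neighborFinset, hB, mem_filter, mem_univ, true_and]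
      constructor
      · rintro ⟨h1, h2, _, _⟩; exact ⟨h2, h1⟩
      · rintro ⟨h1, h2⟩
        refine ⟨h2, h1, ?_, ?_⟩
        · rintro rfl; exact haw h2.symm
        · rintro rfl; exact hcw h2.symm
    rw [he]; exact hmu b w (fun e => hwb e.symm) hbw
  have hNwC : ∀ w ∈ W, (G.neighborFinset w ∩ C).card = 2 := by
    intro w hw
    obtain ⟨_, _, _, hwa, hwb, hwc⟩ := hWmem w hw
    obtain ⟨haw, hbw, hcw⟩ := hWnadj w hw
    have he : G.neighborFinset w ∩ C = G.neighborFinset c ∩ G.neighborFinset w := by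
      ext v
      simp only [mem_inter, SimpleGraph.mem_neighborFinset, hC, mem_filter, mem_univ, true_and]
      constructor
      · rintro ⟨h1, h2, _, _⟩; exact ⟨h2, h1⟩
      · rintro ⟨h1, h2⟩
        refine ⟨h2, h1, ?_, ?_⟩
        · rintro rfl; exact haw h2.symm
        · rintro rfl; exact hbw h2.symm
    rw [he]; exact hmu c w (fun e => hwc e.symm) hcw
  -- neighbors of w are all in A ∪ B ∪ C
  have hNw : ∀ w ∈ W, G.neighborFinset w ⊆ A ∪ B ∪ C := by
    intro w hw
    have hdist : G.neighborFinset w ∩ (A ∪ B ∪ C)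
        = (G.neighborFinset w ∩ A) ∪ (G.neighborFinset w ∩ B) ∪ (G.neighborFinset w ∩ C) := by
      rw [inter_union_distrib_left, inter_union_distrib_left]
    have hc6 : (G.neighborFinset w ∩ (A ∪ B ∪ C)).card = 6 := by
      rw [hdist, card_union_of_disjoint, card_union_of_disjoint, hNwA w hw, hNwB w hw, hNwC w hw]
      · exact hABd.mono inter_subset_right inter_subset_right
      · rw [disjoint_union_left]
        exact ⟨hACd.mono inter_subset_right inter_subset_right,
          hBCd.mono inter_subset_right inter_subset_right⟩
    have := eq_of_subset_of_card_le (inter_subset_left :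
        G.neighborFinset w ∩ (A ∪ B ∪ C) ⊆ G.neighborFinset w) (by rw [hdeg w, hc6])
    exact (Finset.inter_eq_left.mp this)
  -- notation
  set T := ((G.cliqueFinset 3).filter
      (fun t => (t ∩ W).card = 1 ∧ (t ∩ (A ∪ B ∪ C)).card = 2)) with hTdef
  -- pairs count around each w
  have hPw : ∀ w ∈ W,
      (((G.neighborFinset w ×ˢ G.neighborFinset w).filter (fun q => G.Adj q.1 q.2)).card : ℕ)
        = 6 := by
    intro w hw
    have hbu : ((G.neighborFinset w ×ˢ G.neighborFinset w).filter (fun q => G.Adj q.1 q.2))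
        = (G.neighborFinset w).biUnion (fun x =>
            ((G.neighborFinset w).filter (fun y => G.Adj x y)).image (fun y => (x, y))) := by
      ext q
      simp only [mem_filter, mem_product, mem_biUnion, mem_image, Prod.ext_iff]
      constructor
      · rintro ⟨⟨h1, h2⟩, h3⟩
        exact ⟨q.1, h1, q.2, ⟨h2, h3⟩, rfl, rfl⟩
      · rintro ⟨x, hx, y, ⟨hy, hxy⟩, he1, he2⟩
        subst he1; subst he2
        exact ⟨⟨hx, hy⟩, hxy⟩
    rw [hbu, card_biUnion]
    · have hone : ∀ x ∈ G.neighborFinset w,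
          (((G.neighborFinset w).filter (fun y => G.Adj x y)).image (fun y => (x, y))).card
            = 1 := by
        intro x hx
        rw [card_image_of_injective _ (fun y1 y2 e => (Prod.ext_iff.mp e).2)]
        have he : (G.neighborFinset w).filter (fun y => G.Adj x y)
            = G.neighborFinset x ∩ G.neighborFinset w := by
          ext v
          simp only [mem_filter, mem_inter, SimpleGraph.mem_neighborFinset]
          tauto
        rw [he, srg_aux_cnf, h.of_adj x w (SimpleGraph.mem_neighborFinset G w x |>.mp hx).symm]
      rw [Finset.sum_congr rfl hone, Finset.sum_const, hdeg w, smul_eq_mul]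
    · intro x hx y hy hxy
      rw [Function.onFun, Finset.disjoint_left]
      rintro ⟨p1, p2⟩ hp1 hp2
      simp only [mem_image] at hp1 hp2
      obtain ⟨_, _, e1⟩ := hp1
      obtain ⟨_, _, e2⟩ := hp2
      exact hxy ((Prod.ext_iff.mp e1).1.trans (Prod.ext_iff.mp e2).1.symm)
  -- triangles through each w
  have hTw : ∀ w ∈ W, (T.filter (fun t => w ∈ t)).card = 3 := by
    intro w hw
    obtain ⟨hnA, hnB, hnC, _, _, _⟩ := hWmem w hw
    set Pw := ((G.neighborFinset w ×ˢ G.neighborFinset w).filter (fun q => G.Adj q.1 q.2))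
      with hPwdef
    have Hmap : ∀ q ∈ Pw, ({w, q.1, q.2} : Finset V) ∈ T.filter (fun t => w ∈ t) := by
      rintro ⟨x, y⟩ hq
      simp only [hPwdef, mem_filter, mem_product] at hq
      obtain ⟨⟨hx, hy⟩, hxy⟩ := hq
      have hwx : G.Adj w x := (SimpleGraph.mem_neighborFinset G w x).mp hx
      have hwy : G.Adj w y := (SimpleGraph.mem_neighborFinset G w y).mp hy
      have hxU : x ∈ A ∪ B ∪ C := hNw w hw hx
      have hyU : y ∈ A ∪ B ∪ C := hNw w hw hy
      have hxW : x ∉ W := by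
        intro hxw
        obtain ⟨h1, h2, h3, _, _, _⟩ := hWmem x hxw
        simp only [mem_union] at hxU
        tauto
      have hyW : y ∉ W := by
        intro hyw
        obtain ⟨h1, h2, h3, _, _, _⟩ := hWmem y hyw
        simp only [mem_union] at hyU
        tauto
      have hwU : w ∉ A ∪ B ∪ C := by
        simp only [mem_union]; tauto
      rw [mem_filter]
      refine ⟨?_, by simp⟩
      rw [hTdef, mem_filter]
      refine ⟨SimpleGraph.mem_cliqueFinset_iff.mpr
        (SimpleGraph.is3Clique_triple_iff.mpr ⟨hwx, hwy, hxy⟩), ?_, ?_⟩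
      · have : ({w, x, y} : Finset V) ∩ W = {w} := by
          ext v
          simp only [mem_inter, mem_insert, mem_singleton]
          constructor
          · rintro ⟨rfl | rfl | rfl, hvW⟩
            · rfl
            · exact absurd hvW hxW
            · exact absurd hvW hyW
          · rintro rfl; exact ⟨Or.inl rfl, hw⟩
        rw [this, card_singleton]
      · have : ({w, x, y} : Finset V) ∩ (A ∪ B ∪ C) = {x, y} := by
          ext v
          simp only [mem_inter, mem_insert, mem_singleton]
          constructor
          · rintro ⟨rfl | rfl | rfl, hvU⟩
            · exact absurd hvU hwU
            · exact Or.inl rfl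
            · exact Or.inr rfl
          · rintro (rfl | rfl)
            · exact ⟨Or.inr (Or.inl rfl), hxU⟩
            · exact ⟨Or.inr (Or.inr rfl), hyU⟩
        rw [this, card_pair hxy.ne]
    have hcount := Finset.card_eq_sum_card_fiberwise
      (f := fun q : V × V => ({w, q.1, q.2} : Finset V)) Hmap
    have hfib : ∀ t ∈ T.filter (fun t => w ∈ t),
        (Pw.filter (fun q => ({w, q.1, q.2} : Finset V) = t)).card = 2 := by
      intro t ht
      rw [mem_filter] at ht
      obtain ⟨htT, hwt⟩ := ht
      rw [hTdef, mem_filter] at htT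
      have hclq := SimpleGraph.mem_cliqueFinset_iff.mp htT.1
      have hcard3 : t.card = 3 := hclq.card_eq
      have hclique := hclq.isClique
      have hcarde : (t.erase w).card = 2 := by
        rw [card_erase_of_mem hwt, hcard3]
      obtain ⟨x, y, hxyne, hexy⟩ := Finset.card_eq_two.mp hcarde
      have hxt : x ∈ t := mem_of_mem_erase (hexy ▸ mem_insert_self x {y})
      have hyt : y ∈ t := mem_of_mem_erase (hexy ▸ mem_insert_of_mem (mem_singleton_self y))
      have hxw : x ≠ w := ne_of_mem_erase (hexy ▸ mem_insert_self x {y})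
      have hyw : y ≠ w := ne_of_mem_erase (hexy ▸ mem_insert_of_mem (mem_singleton_self y))
      have hwx : G.Adj w x := hclique hwt hxt (Ne.symm hxw)
      have hwy : G.Adj w y := hclique hwt hyt (Ne.symm hyw)
      have hxy : G.Adj x y := hclique hxt hyt hxyne
      have hteq : t = insert w {x, y} := by
        rw [← hexy, insert_erase hwt]
      have hfibeq : Pw.filter (fun q => ({w, q.1, q.2} : Finset V) = t)
          = {(x, y), (y, x)} := by
        ext ⟨u, v⟩
        simp only [mem_filter, hPwdef, mem_product, mem_insert, mem_singleton, Prod.ext_iff]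
        constructor
        · rintro ⟨⟨⟨hu, hv⟩, huv⟩, hins⟩
          have huw : u ≠ w := ((SimpleGraph.mem_neighborFinset G w u).mp hu).ne'
          have hvw : v ≠ w := ((SimpleGraph.mem_neighborFinset G w v).mp hv).ne'
          have hut : u ∈ t := hins ▸ mem_insert_of_mem (mem_insert_self u {v})
          have hvt : v ∈ t := hins ▸ mem_insert_of_mem (mem_insert_of_mem (mem_singleton_self v))
          have hue : u ∈ ({x, y} : Finset V) := by
            rw [← hexy]; exact mem_erase.mpr ⟨huw, hut⟩
          have hve : v ∈ ({x, y} : Finset V) := by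
            rw [← hexy]; exact mem_erase.mpr ⟨hvw, hvt⟩
          simp only [mem_insert, mem_singleton] at hue hve
          rcases hue with rfl | rfl <;> rcases hve with rfl | rfl
          · exact absurd rfl huv.ne
          · exact Or.inl ⟨rfl, rfl⟩
          · exact Or.inr ⟨rfl, rfl⟩
          · exact absurd rfl huv.ne
        · rintro (⟨e1, e2⟩ | ⟨e1, e2⟩)
          · refine ⟨⟨⟨?_, ?_⟩, ?_⟩, ?_⟩
            · rw [e1]; exact (SimpleGraph.mem_neighborFinset G w x).mpr hwx
            · rw [e2]; exact (SimpleGraph.mem_neighborFinset G w y).mpr hwy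
            · rw [e1, e2]; exact hxy
            · rw [e1, e2]; exact hteq.symm
          · refine ⟨⟨⟨?_, ?_⟩, ?_⟩, ?_⟩
            · rw [e1]; exact (SimpleGraph.mem_neighborFinset G w y).mpr hwy
            · rw [e2]; exact (SimpleGraph.mem_neighborFinset G w x).mpr hwx
            · rw [e1, e2]; exact hxy.symm
            · rw [e1, e2, hteq]
              congr 1
              exact pair_comm y x
      rw [hfibeq, card_pair]
      intro he
      exact hxyne (Prod.ext_iff.mp he).1
    have h6 : Pw.card = 6 := hPw w hw
    rw [hcount, Finset.sum_congr rfl hfib, Finset.sum_const, smul_eq_mul] at h6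
    omega
  -- decompose T over W
  have hTdecomp : T = W.biUnion (fun w => T.filter (fun t => w ∈ t)) := by
    ext t
    simp only [mem_biUnion, mem_filter]
    constructor
    · intro ht
      have h1 : (t ∩ W).card = 1 := by
        rw [hTdef, mem_filter] at ht
        exact ht.2.1
      obtain ⟨w, hw⟩ := card_pos.mp (by rw [h1]; norm_num : 0 < (t ∩ W).card)
      rw [mem_inter] at hw
      exact ⟨w, hw.2, ht, hw.1⟩
    · rintro ⟨w, _, ht, _⟩
      exact ht
  rw [hTdecomp, card_biUnion]
  · rw [Finset.sum_congr rfl hTw, Finset.sum_const, hcardW, smul_eq_mul]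
  · intro w1 hw1 w2 hw2 hne
    rw [Function.onFun, Finset.disjoint_left]
    intro t ht1 ht2
    rw [mem_filter] at ht1 ht2
    have h1 : (t ∩ W).card = 1 := by
      have := ht1.1
      rw [hTdef, mem_filter] at this
      exact this.2.1
    have hsub : ({w1, w2} : Finset V) ⊆ t ∩ W := by
      intro v hv
      simp only [mem_insert, mem_singleton] at hv
      rcases hv with rfl | rfl
      · exact mem_inter.mpr ⟨ht1.2, hw1⟩
      · exact mem_inter.mpr ⟨ht2.2, hw2⟩
    have := card_le_card hsub
    rw [card_pair hne, h1] at this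
    omega
end

section
/- Let G be a strongly regular graph with parameters (19, 6, 1, 2), let {a, b, c} be a triangle in G, and let A, B, C be the sets of neighbors of a, b, c respectively excluding the triangle vertices. Then the induced subgraph of G on A ∪ B ∪ C contains no triangle. -/
open Finset SimpleGraph

variable {V : Type} [Fintype V] [DecidableEq V] {G : SimpleGraph V} [DecidableRel G.Adj]

private lemma cc (v w : V) :
    (G.neighborFinset v ∩ G.neighborFinset w).card = Fintype.card (G.commonNeighbors v w) := by
  rw [← Set.toFinset_card]
  congr 1
  ext u
  rw [Set.mem_toFinset]
  simp [commonNeighbors, mem_neighborFinset]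

private lemma adj_card (h : G.IsSRGWith 19 6 1 2) {v w : V} (hvw : G.Adj v w) :
    (G.neighborFinset v ∩ G.neighborFinset w).card = 1 := by
  rw [cc]; exact h.of_adj v w hvw

private lemma nadj_card (h : G.IsSRGWith 19 6 1 2) {v w : V} (hne : v ≠ w)
    (hvw : ¬ G.Adj v w) : (G.neighborFinset v ∩ G.neighborFinset w).card = 2 := by
  rw [cc]; exact h.of_not_adj hne hvw

private lemma sameSet (h : G.IsSRGWith 19 6 1 2) {p u v w : V}
    (hpu : G.Adj p u) (hpv : G.Adj p v) (huv : G.Adj u v)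
    (hwu : G.Adj w u) (hwv : G.Adj w v) (hwp : w ≠ p) : False := by
  have h1 := adj_card h huv
  have hsub : ({p, w} : Finset V) ⊆ G.neighborFinset u ∩ G.neighborFinset v := by
    intro t ht
    simp only [mem_insert, mem_singleton] at ht
    rcases ht with rfl | rfl <;>
      simp [mem_inter, mem_neighborFinset, hpu.symm, hpv.symm, hwu.symm, hwv.symm]
  have := Finset.card_le_card hsub
  rw [h1, Finset.card_pair hwp.symm] at this
  omega

/-- Adjacent vertices have a *unique* common neighbor. -/
private lemma uniq (h : G.IsSRGWith 19 6 1 2) {u v s t : V} (huv : G.Adj u v)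
    (hus : G.Adj u s) (hvs : G.Adj v s) (hut : G.Adj u t) (hvt : G.Adj v t) : s = t := by
  by_contra hne
  exact sameSet h hus.symm hvs.symm huv hut.symm hvt.symm (Ne.symm hne)

/-- A vertex `w` adjacent to apex `p` of a triangle `p q r` (and distinct from and
nonadjacent to `q, r`) has at least 2 neighbors outside `N(p) ∪ N(q) ∪ N(r)`. -/
private lemma two_outside (h : G.IsSRGWith 19 6 1 2) {p q r w : V}
    (hpq : G.Adj p q) (hpr : G.Adj p r) (hqr : G.Adj q r)
    (hpw : G.Adj p w) (hwq : w ≠ q) (hwr : w ≠ r)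
    (hnwq : ¬ G.Adj w q) (hnwr : ¬ G.Adj w r) :
    2 ≤ (G.neighborFinset w \
        (G.neighborFinset p ∪ G.neighborFinset q ∪ G.neighborFinset r)).card := by
  set Np := G.neighborFinset p
  set Nq := G.neighborFinset q
  set Nr := G.neighborFinset r
  set Nw := G.neighborFinset w with hNw
  have deg : Nw.card = 6 := by
    rw [hNw, card_neighborFinset_eq_degree]; exact h.regular w
  have h1 : (Nw ∩ Np).card = 1 := adj_card h hpw.symm
  have h2 : (Nw ∩ Nq).card = 2 := nadj_card h hwq hnwq
  have h3 : (Nw ∩ Nr).card = 2 := nadj_card h hwr hnwr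
  have hp_mem : p ∈ Nw ∩ Nq ∩ Nr := by
    simp [Nw, Nq, Nr, mem_inter, mem_neighborFinset, hpw.symm, hpq.symm, hpr.symm]
  have h4 : 1 ≤ ((Nw ∩ Nq) ∩ (Nw ∩ Nr)).card := by
    apply Finset.card_pos.mpr
    refine ⟨p, ?_⟩
    simp only [mem_inter] at hp_mem ⊢
    exact ⟨⟨hp_mem.1.1, hp_mem.1.2⟩, hp_mem.1.1, hp_mem.2⟩
  have h5 : (Nw ∩ (Nq ∪ Nr)).card ≤ 3 := by
    rw [Finset.inter_union_distrib_left]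
    have := Finset.card_union_add_card_inter (Nw ∩ Nq) (Nw ∩ Nr)
    omega
  have h6 : (Nw ∩ (Np ∪ Nq ∪ Nr)).card ≤ 4 := by
    rw [Finset.union_assoc, Finset.inter_union_distrib_left]
    calc (Nw ∩ Np ∪ Nw ∩ (Nq ∪ Nr)).card
        ≤ (Nw ∩ Np).card + (Nw ∩ (Nq ∪ Nr)).card := Finset.card_union_le _ _
      _ ≤ 4 := by omega
  have := Finset.card_inter_add_card_sdiff Nw (Np ∪ Nq ∪ Nr)
  omega

private lemma cross (h : G.IsSRGWith 19 6 1 2) {p q r x y z : V}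
    (hpx : G.Adj p x) (hqy : G.Adj q y) (hrz : G.Adj r z)
    (hpq : G.Adj p q) (hpr : G.Adj p r) (hqr : G.Adj q r)
    (hxq : x ≠ q) (hxr : x ≠ r) (hyp : y ≠ p) (hyr : y ≠ r) (hzp : z ≠ p) (hzq : z ≠ q)
    (hxy : G.Adj x y) (hyz : G.Adj y z) (hxz : G.Adj x z) : False := by
  have hnxq : ¬ G.Adj x q := fun hq => hxr (uniq h hpq hpx hq.symm hpr hqr)
  have hnxr : ¬ G.Adj x r := fun hr => hxq (uniq h hpr hpx hr.symm hpq hqr.symm)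
  have hnyp : ¬ G.Adj y p := fun hp => hyr (uniq h hpq hp.symm hqy hpr hqr)
  have hnyr : ¬ G.Adj y r := fun hr => hyp (uniq h hqr hpq.symm hpr.symm hqy hr.symm).symm
  have hnzp : ¬ G.Adj z p := fun hp => hzq (uniq h hpr hp.symm hrz hpq hqr.symm)
  have hnzq : ¬ G.Adj z q := fun hq => hzp (uniq h hqr hq.symm hrz hpq.symm hpr.symm)
  set Np := G.neighborFinset p with hNp
  set Nq := G.neighborFinset q with hNq
  set Nr := G.neighborFinset r with hNr
  set U : Finset V := Np ∪ Nq ∪ Nr with hU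
  have deg : ∀ v : V, (G.neighborFinset v).card = 6 := fun v => by
    rw [card_neighborFinset_eq_degree]; exact h.regular v
  -- |U| ≥ 15
  have hUcard : 15 ≤ U.card := by
    have h1 := Finset.card_union_add_card_inter Np Nq
    rw [deg, deg, adj_card h hpq] at h1
    have h2 : ((Np ∪ Nq) ∩ Nr).card ≤ 2 := by
      rw [Finset.union_inter_distrib_right]
      calc (Np ∩ Nr ∪ Nq ∩ Nr).card
          ≤ (Np ∩ Nr).card + (Nq ∩ Nr).card := Finset.card_union_le _ _
        _ = 2 := by rw [adj_card h hpr, adj_card h hqr]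
    have h3 := Finset.card_union_add_card_inter (Np ∪ Nq) Nr
    rw [deg] at h3
    rw [hU]
    omega
  have hUle : U.card ≤ 19 := by
    have := Finset.card_le_card (Finset.subset_univ U)
    rwa [Finset.card_univ, h.card] at this
  set Dx : Finset V := G.neighborFinset x \ U with hDx
  set Dy : Finset V := G.neighborFinset y \ U with hDy
  set Dz : Finset V := G.neighborFinset z \ U with hDz
  have hx2 : 2 ≤ Dx.card := two_outside h hpq hpr hqr hpx hxq hxr hnxq hnxr
  have hy2 : 2 ≤ Dy.card := by
    have := two_outside h hpq.symm hqr hpr hqy hyp hyr hnyp hnyr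
    have heq : Nq ∪ Np ∪ Nr = U := by rw [hU]; ac_rfl
    rwa [← hNq, ← hNp, ← hNr, heq, ← hDy] at this
  have hz2 : 2 ≤ Dz.card := by
    have := two_outside h hpr.symm hqr.symm hpq hrz hzp hzq hnzp hnzq
    have heq : Nr ∪ Np ∪ Nq = U := by rw [hU]; ac_rfl
    rwa [← hNr, ← hNp, ← hNq, heq, ← hDz] at this
  -- pairwise disjoint
  have key : ∀ u v t : V, G.Adj u v → G.Adj u t → G.Adj v t → t ∈ U →
      Disjoint (G.neighborFinset u \ U) (G.neighborFinset v \ U) := by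
    intro u v t huv hut hvt htU
    rw [Finset.disjoint_left]
    intro s hs1 hs2
    rw [Finset.mem_sdiff, mem_neighborFinset] at hs1 hs2
    have : s = t := uniq h huv hs1.1 hs2.1 hut hvt
    exact hs1.2 (this ▸ htU)
  have hzU : z ∈ U := by
    rw [hU]
    exact Finset.mem_union_right _ (by rw [hNr, mem_neighborFinset]; exact hrz)
  have hxU : x ∈ U := by
    rw [hU, Finset.union_assoc]
    exact Finset.mem_union_left _ (by rw [hNp, mem_neighborFinset]; exact hpx)
  have hyU : y ∈ U := by
    rw [hU, Finset.union_assoc]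
    exact Finset.mem_union_right _
      (Finset.mem_union_left _ (by rw [hNq, mem_neighborFinset]; exact hqy))
  have d1 : Disjoint Dx Dy := key x y z hxy hxz hyz hzU
  have d2 : Disjoint Dy Dz := key y z x hyz hxy.symm hxz.symm hxU
  have d3 : Disjoint Dx Dz := key x z y hxz hxy hyz.symm hyU
  have hsub : Dx ∪ Dy ∪ Dz ⊆ Finset.univ \ U := by
    intro t ht
    simp only [Finset.mem_union, hDx, hDy, hDz, Finset.mem_sdiff] at ht ⊢
    exact ⟨Finset.mem_univ t, by tauto⟩
  have hcard : (Dx ∪ Dy ∪ Dz).card = Dx.card + Dy.card + Dz.card := by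
    rw [Finset.card_union_of_disjoint (Finset.disjoint_union_left.mpr ⟨d3, d2⟩),
      Finset.card_union_of_disjoint d1]
  have hDcard : (Finset.univ \ U).card ≤ 4 := by
    rw [Finset.card_sdiff_of_subset (Finset.subset_univ U), Finset.card_univ, h.card]
    omega
  have := Finset.card_le_card hsub
  omega

/-- For a triangle {a,b,c} in an srg(19,6,1,2), the induced subgraph on A ∪ B ∪ C
contains no triangle. -/
theorem srg_19_6_1_2_ABC_triangle_free
    {V : Type} [Fintype V] [DecidableEq V] (G : SimpleGraph V) [DecidableRel G.Adj]
    (h : G.IsSRGWith 19 6 1 2) (a b c : V)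
    (hab : G.Adj a b) (hac : G.Adj a c) (hbc : G.Adj b c)
    (A B C : Finset V)
    (hA : A = Finset.univ.filter (fun v => G.Adj a v ∧ v ≠ b ∧ v ≠ c))
    (hB : B = Finset.univ.filter (fun v => G.Adj b v ∧ v ≠ a ∧ v ≠ c))
    (hC : C = Finset.univ.filter (fun v => G.Adj c v ∧ v ≠ a ∧ v ≠ b)) :
    ∀ x ∈ A ∪ B ∪ C, ∀ y ∈ A ∪ B ∪ C, ∀ z ∈ A ∪ B ∪ C,
      ¬ (G.Adj x y ∧ G.Adj y z ∧ G.Adj x z) := by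
  subst hA hB hC
  intro x hx y hy z hz ⟨hxy, hyz, hxz⟩
  simp only [Finset.mem_union, Finset.mem_filter, Finset.mem_univ, true_and] at hx hy hz
  rcases hx with (⟨hx1, hx2, hx3⟩ | ⟨hx1, hx2, hx3⟩) | ⟨hx1, hx2, hx3⟩ <;>
  rcases hy with (⟨hy1, hy2, hy3⟩ | ⟨hy1, hy2, hy3⟩) | ⟨hy1, hy2, hy3⟩ <;>
  rcases hz with (⟨hz1, hz2, hz3⟩ | ⟨hz1, hz2, hz3⟩) | ⟨hz1, hz2, hz3⟩ <;>
  first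
    | exact sameSet h hx1 hy1 hxy hxz.symm hyz.symm
        (by first | exact hz1.ne' | exact hz2 | exact hz3)
    | exact sameSet h hy1 hz1 hyz hxy hxz
        (by first | exact hx1.ne' | exact hx2 | exact hx3)
    | exact sameSet h hx1 hz1 hxz hxy.symm hyz
        (by first | exact hy1.ne' | exact hy2 | exact hy3)
    | exact cross h hx1 hy1 hz1
        (by first | exact hab | exact hab.symm | exact hac | exact hac.symm | exact hbc | exact hbc.symm)
        (by first | exact hab | exact hab.symm | exact hac | exact hac.symm | exact hbc | exact hbc.symm)
        (by first | exact hab | exact hab.symm | exact hac | exact hac.symm | exact hbc | exact hbc.symm)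
        (by first | exact hx2 | exact hx3) (by first | exact hx2 | exact hx3)
        (by first | exact hy2 | exact hy3) (by first | exact hy2 | exact hy3)
        (by first | exact hz2 | exact hz3) (by first | exact hz2 | exact hz3)
        hxy hyz hxz
end

section
/- Let G be a strongly regular graph with parameters (19, 6, 1, 2), let {a, b, c} be a triangle in G, and let A and B be the sets of neighbors of a and of b excluding the triangle vertices. Then every vertex of A is adjacent to exactly one vertex of B, and every vertex of B is adjacent to exactly one vertex of A; hence the adjacency relation between A and B defines a bijection from A to B. -/
/-! In an srg(19, 6, 1, 2) two adjacent vertices have exactly one common neighbour, so a vertex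
`x ∈ A` is adjacent to neither `b` nor `c`. Being non-adjacent to `b`, it shares exactly two
neighbours with `b`; one of them is `a`, and the other one is the unique neighbour of `x` in `B`.
By the symmetry `a ↔ b` the same holds from `B` to `A`, and a relation that is a partial
bijection in both directions is the graph of a bijection. -/

theorem Set.exists_bijOn_of_existsUnique {α β : Type*} [Nonempty β] {s : Set α} {t : Set β}
    {r : α → β → Prop} (hs : ∀ x ∈ s, ∃! y, y ∈ t ∧ r x y) (ht : ∀ y ∈ t, ∃! x, x ∈ s ∧ r x y) :
    ∃ f : α → β, Set.BijOn f s t ∧ ∀ x ∈ s, r x (f x) := by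
  choose! f hf hf_unique using hs
  refine ⟨f, ⟨fun x hx => (hf x hx).1, fun x₁ hx₁ x₂ hx₂ hfx => ?_, fun y hy => ?_⟩,
    fun x hx => (hf x hx).2⟩
  · exact (ht _ (hf x₁ hx₁).1).unique ⟨hx₁, (hf x₁ hx₁).2⟩ ⟨hx₂, hfx ▸ (hf x₂ hx₂).2⟩
  · obtain ⟨x, ⟨hx, hxy⟩, -⟩ := ht y hy
    exact ⟨x, hx, (hf_unique x hx y ⟨hy, hxy⟩).symm⟩

namespace SimpleGraph.IsSRGWith

variable {V : Type*} [Fintype V] {G : SimpleGraph V} [DecidableRel G.Adj]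
  {n k ℓ μ : ℕ}

theorem eq_of_adj_of_adj (h : G.IsSRGWith n k 1 μ) {u v w x : V} (huv : G.Adj u v)
    (huw : G.Adj u w) (hvw : G.Adj v w) (hux : G.Adj u x) (hvx : G.Adj v x) : x = w := by
  have : Subsingleton (G.commonNeighbors u v) :=
    Fintype.card_le_one_iff_subsingleton.mp (h.of_adj u v huv).le
  exact congrArg Subtype.val
    (Subsingleton.elim (⟨x, hux, hvx⟩ : G.commonNeighbors u v) ⟨w, huw, hvw⟩)

theorem existsUnique_mem_commonNeighbors_ne (h : G.IsSRGWith n k ℓ 2) {x y a : V} (hxy : x ≠ y)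
    (hnadj : ¬G.Adj x y) (ha : a ∈ G.commonNeighbors x y) :
    ∃! z, z ∈ G.commonNeighbors x y ∧ z ≠ a := by
  have hcard : (G.commonNeighbors x y \ {a}).ncard = 1 := by
    rw [Set.ncard_sdiff_singleton_of_mem ha, ← Nat.card_coe_set_eq, Nat.card_eq_fintype_card,
      h.of_not_adj hxy hnadj]
  obtain ⟨z, hz⟩ := Set.ncard_eq_one.mp hcard
  simp only [Set.ext_iff, Set.mem_sdiff, Set.mem_singleton_iff] at hz
  exact ⟨z, (hz z).2 rfl, fun z' hz' => (hz z').1 hz'⟩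

theorem existsUnique_adj_of_triangle (h : G.IsSRGWith n k 1 2) {a b c x : V} (hab : G.Adj a b)
    (hac : G.Adj a c) (hbc : G.Adj b c) (hx : G.Adj a x ∧ x ≠ b ∧ x ≠ c) :
    ∃! y, (G.Adj b y ∧ y ≠ a ∧ y ≠ c) ∧ G.Adj x y := by
  obtain ⟨hax, hxb, hxc⟩ := hx
  have hnxb : ¬G.Adj x b := fun hxb' => hxc (h.eq_of_adj_of_adj hab hac hbc hax hxb'.symm)
  have hnxc : ¬G.Adj x c := fun hxc' => hxb (h.eq_of_adj_of_adj hac hab hbc.symm hax hxc'.symm)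
  obtain ⟨y, ⟨⟨hxy, hby⟩, hya⟩, hy_unique⟩ :=
    h.existsUnique_mem_commonNeighbors_ne hxb hnxb ⟨hax.symm, hab.symm⟩
  refine ⟨y, ⟨⟨hby, hya, ?_⟩, hxy⟩, fun y' ⟨⟨hby', hy'a, _⟩, hxy'⟩ => ?_⟩
  · rintro rfl
    exact hnxc hxy
  · exact hy_unique y' ⟨⟨hxy', hby'⟩, hy'a⟩

end SimpleGraph.IsSRGWith

/-- For a triangle {a,b,c} in an srg(19,6,1,2), every vertex of A is adjacent to exactly
one vertex of B and vice versa; hence adjacency defines a bijection from A to B. -/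
theorem srg_19_6_1_2_A_B_bijection
    {V : Type} [Fintype V] [DecidableEq V] (G : SimpleGraph V) [DecidableRel G.Adj]
    (h : G.IsSRGWith 19 6 1 2) (a b c : V)
    (hab : G.Adj a b) (hac : G.Adj a c) (hbc : G.Adj b c)
    (A B : Finset V)
    (hA : A = Finset.univ.filter (fun v => G.Adj a v ∧ v ≠ b ∧ v ≠ c))
    (hB : B = Finset.univ.filter (fun v => G.Adj b v ∧ v ≠ a ∧ v ≠ c)) :
    (∀ x ∈ A, ∃! y : V, y ∈ B ∧ G.Adj x y) ∧
    (∀ y ∈ B, ∃! x : V, x ∈ A ∧ G.Adj x y) ∧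
    ∃ f : V → V, Set.BijOn f ↑A ↑B ∧ ∀ x ∈ A, G.Adj x (f x) := by
  have hA_mem : ∀ x, x ∈ A ↔ G.Adj a x ∧ x ≠ b ∧ x ≠ c := by simp [hA]
  have hB_mem : ∀ y, y ∈ B ↔ G.Adj b y ∧ y ≠ a ∧ y ≠ c := by simp [hB]
  have hAB : ∀ x ∈ A, ∃! y, y ∈ B ∧ G.Adj x y := fun x hx => by
    simpa only [hB_mem] using h.existsUnique_adj_of_triangle hab hac hbc ((hA_mem x).1 hx)
  have hBA : ∀ y ∈ B, ∃! x, x ∈ A ∧ G.Adj x y := fun y hy => by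
    simpa only [hA_mem, G.adj_comm y] using
      h.existsUnique_adj_of_triangle hab.symm hbc hac ((hB_mem y).1 hy)
  have : Nonempty V := ⟨a⟩
  exact ⟨hAB, hBA, Set.exists_bijOn_of_existsUnique hAB hBA⟩
end

section
/- Let G be a strongly regular graph with parameters (19, 6, 1, 2), let {a, b, c} be a triangle in G, and let A be the set of neighbors of a excluding b and c. Then every vertex of A is adjacent to exactly one other vertex of A; that is, the induced subgraph of G on A is a perfect matching on the 4 vertices of A. -/
/-!
Since `λ = 1`, every edge `uw` lies in exactly one triangle. For a neighbour `x ≠ b, c` of `a`,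
the third vertex `y` of the triangle on `ax` lies in `A`: if `y = b`, then `x` and `c` would be two
common neighbours of `a` and `b`, and similarly for `c`. Conversely any `y ∈ A` adjacent to `x`
is a common neighbour of `a` and `x`, so it is that third vertex.
-/

namespace SimpleGraph

open Finset

variable {V : Type*} [Fintype V] {G : SimpleGraph V}

theorem card_filter_adj_ne_ne [DecidableEq V] [DecidableRel G.Adj] {a b c : V}
    (hab : G.Adj a b) (hac : G.Adj a c) (hbc : b ≠ c) :
    #{v | G.Adj a v ∧ v ≠ b ∧ v ≠ c} = G.degree a - 2 := by
  have hfilter : ({v | G.Adj a v ∧ v ≠ b ∧ v ≠ c} : Finset V) = G.neighborFinset a \ {b, c} := by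
    ext v
    simp [and_comm]
  have hsub : ({b, c} : Finset V) ⊆ G.neighborFinset a := by
    simp [insert_subset_iff, hab, hac]
  rw [hfilter, card_sdiff_of_subset hsub, card_neighborFinset_eq_degree, card_pair hbc]

variable [DecidableRel G.Adj] {n k μ : ℕ}

theorem IsSRGWith.existsUnique_mem_commonNeighbors (h : G.IsSRGWith n k 1 μ) {u w : V}
    (huw : G.Adj u w) : ∃! z, z ∈ G.commonNeighbors u w := by
  obtain ⟨⟨z, hz⟩, hz_unique⟩ := Fintype.card_eq_one_iff.mp (h.of_adj u w huw)
  exact ⟨z, hz, fun y hy => congrArg Subtype.val (hz_unique ⟨y, hy⟩)⟩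

theorem IsSRGWith.not_adj_of_adj_of_ne (h : G.IsSRGWith n k 1 μ) {a b c x : V}
    (hab : G.Adj a b) (hac : G.Adj a c) (hbc : G.Adj b c) (hax : G.Adj a x) (hxc : x ≠ c) :
    ¬ G.Adj x b := fun hxb =>
  hxc <| (h.existsUnique_mem_commonNeighbors hab).unique ⟨hax, hxb.symm⟩ ⟨hac, hbc⟩

theorem IsSRGWith.existsUnique_adj_of_adj_of_ne_of_ne (h : G.IsSRGWith n k 1 μ) {a b c x : V}
    (hab : G.Adj a b) (hac : G.Adj a c) (hbc : G.Adj b c)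
    (hax : G.Adj a x) (hxb : x ≠ b) (hxc : x ≠ c) :
    ∃! y, (G.Adj a y ∧ y ≠ b ∧ y ≠ c) ∧ y ≠ x ∧ G.Adj x y := by
  have hiff : ∀ y, ((G.Adj a y ∧ y ≠ b ∧ y ≠ c) ∧ y ≠ x ∧ G.Adj x y) ↔
      y ∈ G.commonNeighbors a x := by
    intro y
    refine ⟨fun ⟨⟨hay, _, _⟩, _, hxy⟩ => ⟨hay, hxy⟩, fun ⟨hay, hxy⟩ => ?_⟩
    have hyb : y ≠ b := by
      rintro rfl
      exact h.not_adj_of_adj_of_ne hab hac hbc hax hxc hxy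
    have hyc : y ≠ c := by
      rintro rfl
      exact h.not_adj_of_adj_of_ne hac hab hbc.symm hax hxb hxy
    exact ⟨⟨hay, hyb, hyc⟩, hxy.ne', hxy⟩
  simpa only [hiff] using h.existsUnique_mem_commonNeighbors hax

end SimpleGraph

/-- For a triangle {a,b,c} in an srg(19,6,1,2), every vertex of A is adjacent to exactly
one other vertex of A: the induced subgraph on the 4 vertices of A is a perfect matching. -/
theorem srg_19_6_1_2_A_perfect_matching
    {V : Type} [Fintype V] [DecidableEq V] (G : SimpleGraph V) [DecidableRel G.Adj]
    (h : G.IsSRGWith 19 6 1 2) (a b c : V)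
    (hab : G.Adj a b) (hac : G.Adj a c) (hbc : G.Adj b c)
    (A : Finset V)
    (hA : A = Finset.univ.filter (fun v => G.Adj a v ∧ v ≠ b ∧ v ≠ c)) :
    A.card = 4 ∧ ∀ x ∈ A, ∃! y : V, y ∈ A ∧ y ≠ x ∧ G.Adj x y := by
  have hmemA : ∀ v, v ∈ A ↔ G.Adj a v ∧ v ≠ b ∧ v ≠ c := by simp [hA]
  refine ⟨?_, fun x hx => ?_⟩
  · rw [hA, SimpleGraph.card_filter_adj_ne_ne hab hac hbc.ne, h.regular a]
  · obtain ⟨hax, hxb, hxc⟩ := (hmemA x).mp hx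
    simpa only [hmemA] using h.existsUnique_adj_of_adj_of_ne_of_ne hab hac hbc hax hxb hxc
end

section
/- Let G be a strongly regular graph with parameters (19, 6, 1, 2), let {a, b, c} be a triangle in G, and let A, B, C be the sets of neighbors of a, b, c respectively excluding the triangle vertices. Then the induced subgraph of G on A ∪ B ∪ C is 3-regular: every vertex of A ∪ B ∪ C has exactly 3 neighbors within A ∪ B ∪ C. -/
/-!
Since `λ = 1`, every edge lies in exactly one triangle. Hence a vertex `v ∈ A` is adjacent to
neither `b` nor `c`, and `A`, `B`, `C` are pairwise disjoint. The neighbours of `v` in `A` are the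
common neighbours of `v` and `a`: exactly one. The neighbours of `v` in `B`, together with `a`, are
the `μ = 2` common neighbours of the non-adjacent pair `v`, `b`: again exactly one; likewise for `C`.
-/

open Finset

namespace SimpleGraph

variable {V : Type} [Fintype V] {G : SimpleGraph V} [DecidableRel G.Adj] {n k μ : ℕ} {a b c v : V}

theorem IsSRGWith.eq_of_mem_commonNeighbors_s12 (h : G.IsSRGWith n k 1 μ) (hab : G.Adj a b) {w : V}
    (hv : v ∈ G.commonNeighbors a b) (hw : w ∈ G.commonNeighbors a b) : v = w :=
  (Set.subsingleton_coe _).1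
    (Fintype.card_le_one_iff_subsingleton.1 (h.of_adj a b hab).le) hv hw

theorem IsSRGWith.not_adj_of_triangle (h : G.IsSRGWith n k 1 μ)
    (hab : G.Adj a b) (hac : G.Adj a c) (hbc : G.Adj b c)
    (hav : G.Adj a v) (hvc : v ≠ c) : ¬G.Adj b v := fun hbv =>
  hvc (h.eq_of_mem_commonNeighbors_s12 hab ⟨hav, hbv⟩ ⟨hac, hbc⟩)

variable [DecidableEq V]

variable (G) in
/-- For a triangle `{a, b, c}`, the sets `A`, `B`, `C` are `G.triangleArm a b c`,
`G.triangleArm b a c` and `G.triangleArm c a b`. -/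
def triangleArm (a b c : V) : Finset V :=
  univ.filter fun v => G.Adj a v ∧ v ≠ b ∧ v ≠ c

variable (G) in
def triangleArms (a b c : V) : Finset V :=
  G.triangleArm a b c ∪ G.triangleArm b a c ∪ G.triangleArm c a b

@[simp]
theorem mem_triangleArm : v ∈ G.triangleArm a b c ↔ G.Adj a v ∧ v ≠ b ∧ v ≠ c := by
  simp [triangleArm]

theorem triangleArm_comm (a b c : V) : G.triangleArm a b c = G.triangleArm a c b := by
  ext
  simp only [mem_triangleArm]
  tauto

theorem triangleArms_swap (a b c : V) : G.triangleArms a b c = G.triangleArms b a c := by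
  ext
  simp only [triangleArms, mem_union, mem_triangleArm]
  tauto

theorem triangleArms_rotate (a b c : V) : G.triangleArms a b c = G.triangleArms c a b := by
  ext
  simp only [triangleArms, mem_union, mem_triangleArm]
  tauto

namespace IsSRGWith

variable (h : G.IsSRGWith n k 1 μ) (hab : G.Adj a b) (hac : G.Adj a c) (hbc : G.Adj b c)
include h hab hac hbc

theorem disjoint_triangleArm : Disjoint (G.triangleArm a b c) (G.triangleArm b a c) := by
  refine Finset.disjoint_left.2 fun u hu hu' => ?_
  obtain ⟨hau, -, huc⟩ := mem_triangleArm.1 hu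
  exact h.not_adj_of_triangle hab hac hbc hau huc (mem_triangleArm.1 hu').1

theorem card_filter_adj_triangleArm_self (hv : v ∈ G.triangleArm a b c) :
    #{u ∈ G.triangleArm a b c | G.Adj v u} = 1 := by
  obtain ⟨hav, hvb, hvc⟩ := mem_triangleArm.1 hv
  have : {u ∈ G.triangleArm a b c | G.Adj v u} = (G.commonNeighbors v a).toFinset := by
    ext u
    simp only [mem_filter, mem_triangleArm, Set.mem_toFinset, mem_commonNeighbors]
    refine ⟨fun ⟨⟨hau, _⟩, hvu⟩ => ⟨hvu, hau⟩, fun ⟨hvu, hau⟩ => ⟨⟨hau, ?_, ?_⟩, hvu⟩⟩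
    · rintro rfl
      exact h.not_adj_of_triangle hab hac hbc hav hvc hvu.symm
    · rintro rfl
      exact h.not_adj_of_triangle hac hab hbc.symm hav hvb hvu.symm
  rw [this, Set.toFinset_card, h.of_adj v a hav.symm]

theorem card_filter_adj_triangleArm_cross (hv : v ∈ G.triangleArm a b c) :
    #{u ∈ G.triangleArm b a c | G.Adj v u} + 1 = μ := by
  obtain ⟨hav, hvb, hvc⟩ := mem_triangleArm.1 hv
  have hbv := h.not_adj_of_triangle hab hac hbc hav hvc
  have hcv := h.not_adj_of_triangle hac hab hbc.symm hav hvb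
  have : (G.commonNeighbors v b).toFinset = insert a {u ∈ G.triangleArm b a c | G.Adj v u} := by
    ext u
    simp only [Set.mem_toFinset, mem_commonNeighbors, mem_insert, mem_filter, mem_triangleArm]
    constructor
    · rintro ⟨hvu, hbu⟩
      refine or_iff_not_imp_left.2 fun hua => ⟨⟨hbu, hua, ?_⟩, hvu⟩
      rintro rfl
      exact hcv hvu.symm
    · rintro (rfl | ⟨⟨hbu, -⟩, hvu⟩)
      exacts [⟨hav.symm, hab.symm⟩, ⟨hvu, hbu⟩]
  rw [← h.of_not_adj hvb (fun hvb' => hbv hvb'.symm), ← Set.toFinset_card, this,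
    card_insert_of_notMem (by simp)]

theorem card_filter_adj_triangleArms (hv : v ∈ G.triangleArm a b c) :
    #{u ∈ G.triangleArms a b c | G.Adj v u} + 1 = 2 * μ := by
  have hAB := h.disjoint_triangleArm hab hac hbc
  have hAC : Disjoint (G.triangleArm a b c) (G.triangleArm c a b) := by
    rw [triangleArm_comm a]
    exact h.disjoint_triangleArm hac hab hbc.symm
  have hBC : Disjoint (G.triangleArm b a c) (G.triangleArm c a b) := by
    rw [triangleArm_comm b, triangleArm_comm c]
    exact h.disjoint_triangleArm hbc hab.symm hac.symm
  have hA := h.card_filter_adj_triangleArm_self hab hac hbc hv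
  have hB := h.card_filter_adj_triangleArm_cross hab hac hbc hv
  have hC := h.card_filter_adj_triangleArm_cross hac hab hbc.symm (by rwa [triangleArm_comm])
  rw [triangleArms, filter_union, filter_union,
    card_union_of_disjoint (disjoint_union_left.2 ⟨disjoint_filter_filter hAC,
      disjoint_filter_filter hBC⟩),
    card_union_of_disjoint (disjoint_filter_filter hAB)]
  omega

end IsSRGWith

end SimpleGraph

/-- For a triangle {a,b,c} in an srg(19,6,1,2), the induced subgraph on A ∪ B ∪ C is
3-regular: every vertex of A ∪ B ∪ C has exactly 3 neighbors inside A ∪ B ∪ C. -/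
theorem srg_19_6_1_2_ABC_three_regular
    {V : Type} [Fintype V] [DecidableEq V] (G : SimpleGraph V) [DecidableRel G.Adj]
    (h : G.IsSRGWith 19 6 1 2) (a b c : V)
    (hab : G.Adj a b) (hac : G.Adj a c) (hbc : G.Adj b c)
    (A B C : Finset V)
    (hA : A = Finset.univ.filter (fun v => G.Adj a v ∧ v ≠ b ∧ v ≠ c))
    (hB : B = Finset.univ.filter (fun v => G.Adj b v ∧ v ≠ a ∧ v ≠ c))
    (hC : C = Finset.univ.filter (fun v => G.Adj c v ∧ v ≠ a ∧ v ≠ b)) :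
    ∀ v ∈ A ∪ B ∪ C, ((A ∪ B ∪ C).filter (fun u => G.Adj v u)).card = 3 := by
  obtain rfl : A = G.triangleArm a b c := hA
  obtain rfl : B = G.triangleArm b a c := hB
  obtain rfl : C = G.triangleArm c a b := hC
  intro v hv
  change #{u ∈ G.triangleArms a b c | G.Adj v u} = 3
  rw [mem_union, mem_union] at hv
  rcases hv with (hvA | hvB) | hvC
  · have := h.card_filter_adj_triangleArms hab hac hbc hvA
    omega
  · have := h.card_filter_adj_triangleArms hab.symm hbc hac hvB
    rw [SimpleGraph.triangleArms_swap]
    omega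
  · have := h.card_filter_adj_triangleArms hac.symm hbc.symm hab hvC
    rw [SimpleGraph.triangleArms_rotate]
    omega
end
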